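/- arXiv:2402.14564 — 3 statements merged into one kernel-verified Lean document; each statement's English description precedes it below -/
import Mathlib

section
/- Let I = ∏_{j=1}^n [a_j, b_j] with a_j < b_j for all j, let I̊ = ∏_{j=1}^n (a_j, b_j) be its interior, and let f : I → ℝ be continuous. Define F(x_1,…,x_n) = ∫_{a_n}^{x_n} ⋯ ∫_{a_1}^{x_1} f(u_1,…,u_n) du_1 ⋯ du_n. Then on I̊ the mixed partial derivative ∂_1 ∂_2 ⋯ ∂_n F (taken successively, first in the n-th variable, then the (n−1)-st, and so on down to the first) exists, is continuous on I̊, and satisfies the partial differential equation ∂_1 ⋯ ∂_n F(x_1,…,x_n) = f(x_1,…,x_n) for all (x_1,…,x_n) ∈ I̊. -/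
/-!
By the Tietze extension theorem `f` extends to a continuous `g` on all of `ℝⁿ`, and the iterated
integrals of `f` and `g` agree on the closed box; since partial derivatives are local, it suffices
to treat `g` on the whole space. There we induct on `n`: by the fundamental theorem of calculus
`∂ₙ F(x)` is the `(n-1)`-fold iterated integral of `g(·, xₙ)` evaluated at `(x₁, …, xₙ₋₁)`, which
depends continuously on `xₙ` because parametric primitives of continuous functions are continuous.
The remaining derivatives `∂₁ ⋯ ∂ₙ₋₁` only move the first `n - 1` coordinates, so the induction
hypothesis applies with `xₙ` frozen.
-/

open MeasureTheory

/-- The iterated integral `∫_{a_n}^{x_n} ⋯ ∫_{a_1}^{x_1} f(u_1,…,u_n) du_1 ⋯ du_n`,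
defined by recursion: the outermost integral is taken in the last variable. -/
noncomputable def iterInt : (n : ℕ) → ((Fin n → ℝ) → ℝ) → (Fin n → ℝ) → (Fin n → ℝ) → ℝ
  | 0, f, _, _ => f (fun i => i.elim0)
  | n + 1, f, a, x =>
      ∫ t in (a (Fin.last n))..(x (Fin.last n)),
        iterInt n (fun u => f (Fin.snoc u t)) (fun i => a i.castSucc) (fun i => x i.castSucc)

/-- The partial derivative of `F` in the `i`-th coordinate direction. -/
noncomputable def pd {n : ℕ} (i : Fin n) (F : (Fin n → ℝ) → ℝ) : (Fin n → ℝ) → ℝ :=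
  fun x => deriv (fun t : ℝ => F (Function.update x i t)) (x i)

/-- The partial derivative of `F` in the `i`-th coordinate direction exists at `x`. -/
def PdAt {n : ℕ} (i : Fin n) (F : (Fin n → ℝ) → ℝ) (x : Fin n → ℝ) : Prop :=
  DifferentiableAt ℝ (fun t : ℝ => F (Function.update x i t)) (x i)

/-- Iterated partial derivative in the coordinates listed in `l` (the head of the list
being the outermost, i.e. last taken, derivative). For `l = [0, 1, …, n-1]` this is
`∂_1 ∂_2 ⋯ ∂_n F`, taken successively: first in the `n`-th variable, down to the first. -/
noncomputable def mixedD {n : ℕ} : List (Fin n) → ((Fin n → ℝ) → ℝ) → (Fin n → ℝ) → ℝ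
  | [], F => F
  | i :: l, F => pd i (mixedD l F)

/-- All the successive partial derivatives in `mixedD l F` exist at every point of `s`. -/
def MixedDiffOn {n : ℕ} : List (Fin n) → ((Fin n → ℝ) → ℝ) → Set (Fin n → ℝ) → Prop
  | [], _, _ => True
  | i :: l, F, s => MixedDiffOn l F s ∧ ∀ x ∈ s, PdAt i (mixedD l F) x

open Set Function Fin Filter Topology

universe u v in
theorem ContinuousOn.exists_continuous_eqOn {X : Type u} {Y : Type v} [TopologicalSpace X]
    [NormalSpace X] [TopologicalSpace Y] [TietzeExtension.{u} Y] {s : Set X} (hs : IsClosed s)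
    {f : X → Y} (hf : ContinuousOn f s) : ∃ g : X → Y, Continuous g ∧ EqOn g f s := by
  obtain ⟨g, hg⟩ := ContinuousMap.exists_restrict_eq hs ⟨s.domRestrict f, hf.domRestrict⟩
  exact ⟨g, g.continuous, fun x hx => ContinuousMap.congr_fun hg ⟨x, hx⟩⟩

theorem Fin.snoc_mem_Icc {α : Type*} [Preorder α] {n : ℕ} {a b : Fin (n + 1) → α}
    {u : Fin n → α} {t : α} (hu : u ∈ Icc (init a) (init b))
    (ht : t ∈ Icc (a (last n)) (b (last n))) : (snoc u t : Fin (n + 1) → α) ∈ Icc a b := by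
  simp_all [Pi.le_def, Fin.forall_fin_succ', init]

theorem iterInt_succ {n : ℕ} (f : (Fin (n + 1) → ℝ) → ℝ) (a x : Fin (n + 1) → ℝ) :
    iterInt (n + 1) f a x =
      ∫ t in a (last n)..x (last n), iterInt n (fun u => f (snoc u t)) (init a) (init x) :=
  rfl

/-- The parameter space `P` is what makes the induction go through: one level down, the last
integration variable joins the parameters. -/
theorem continuous_iterInt_param {P : Type*} [TopologicalSpace P] (n : ℕ) (a : Fin n → ℝ)
    {g : P → (Fin n → ℝ) → ℝ} (hg : Continuous (uncurry g)) :
    Continuous fun q : P × (Fin n → ℝ) => iterInt n (g q.1) a q.2 := by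
  induction n generalizing P with
  | zero => exact hg.comp (continuous_fst.prodMk continuous_const)
  | succ n ih =>
    simp only [iterInt_succ]
    have hsnoc : Continuous fun r : (P × ℝ) × (Fin n → ℝ) => g r.1.1 (snoc r.2 r.1.2) :=
      hg.comp (f := fun r : (P × ℝ) × (Fin n → ℝ) => (r.1.1, (snoc r.2 r.1.2 : Fin (n + 1) → ℝ)))
        (by fun_prop)
    have hint := ih (init a) (g := fun (p : P × ℝ) u => g p.1 (snoc u p.2)) hsnoc
    have hprim := intervalIntegral.continuous_parametric_primitive_of_continuous
      (μ := MeasureTheory.volume) (a₀ := a (last n))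
      (f := fun (q : P × (Fin (n + 1) → ℝ)) t =>
        iterInt n (fun u => g q.1 (snoc u t)) (init a) (init q.2))
      (hint.comp (f := fun r : (P × (Fin (n + 1) → ℝ)) × ℝ => ((r.1.1, r.2), init r.1.2))
        (by fun_prop))
    exact hprim.comp (continuous_id.prodMk (by fun_prop))

theorem hasDerivAt_iterInt_update_last {n : ℕ} {f : (Fin (n + 1) → ℝ) → ℝ} (hf : Continuous f)
    (a x : Fin (n + 1) → ℝ) :
    HasDerivAt (fun t => iterInt (n + 1) f a (update x (last n) t))
      (iterInt n (fun u => f (snoc u (x (last n)))) (init a) (init x)) (x (last n)) := by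
  have hparam := continuous_iterInt_param n (init a) (g := fun t u => f (snoc u t))
    (hf.comp (by fun_prop))
  have hG : Continuous fun t => iterInt n (fun u => f (snoc u t)) (init a) (init x) :=
    hparam.comp (continuous_id.prodMk continuous_const)
  simp only [iterInt_succ, update_self, init_update_last]
  exact (hG.integral_hasStrictDerivAt _ _).hasDerivAt

theorem pd_last_iterInt {n : ℕ} {f : (Fin (n + 1) → ℝ) → ℝ} (hf : Continuous f)
    (a : Fin (n + 1) → ℝ) :
    pd (last n) (iterInt (n + 1) f a) =
      fun x => iterInt n (fun u => f (snoc u (x (last n)))) (init a) (init x) :=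
  funext fun x => (hasDerivAt_iterInt_update_last hf a x).deriv

theorem pdAt_last_iterInt {n : ℕ} {f : (Fin (n + 1) → ℝ) → ℝ} (hf : Continuous f)
    (a x : Fin (n + 1) → ℝ) : PdAt (last n) (iterInt (n + 1) f a) x :=
  (hasDerivAt_iterInt_update_last hf a x).differentiableAt

section LastCoordinate

variable {n : ℕ} (G : ℝ → (Fin n → ℝ) → ℝ)

theorem pd_castSucc_comp_init (i : Fin n) :
    pd i.castSucc (fun y => G (y (last n)) (init y)) = fun x => pd i (G (x (last n))) (init x) := by
  funext x
  simp only [pd, init_update_castSucc, update_of_ne (castSucc_lt_last i).ne']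
  rfl

theorem pdAt_castSucc_comp_init_iff (i : Fin n) (x : Fin (n + 1) → ℝ) :
    PdAt i.castSucc (fun y => G (y (last n)) (init y)) x ↔ PdAt i (G (x (last n))) (init x) := by
  simp only [PdAt, init_update_castSucc, update_of_ne (castSucc_lt_last i).ne']
  rfl

theorem mixedD_map_castSucc (l : List (Fin n)) :
    mixedD (l.map castSucc) (fun y => G (y (last n)) (init y)) =
      fun x => mixedD l (G (x (last n))) (init x) := by
  induction l generalizing G with
  | nil => rfl
  | cons i l ih =>
    exact (congrArg (pd i.castSucc) (ih G)).trans (pd_castSucc_comp_init (fun t => mixedD l (G t)) i)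

theorem mixedDiffOn_map_castSucc (l : List (Fin n)) (h : ∀ t, MixedDiffOn l (G t) univ) :
    MixedDiffOn (l.map castSucc) (fun y => G (y (last n)) (init y)) univ := by
  induction l generalizing G with
  | nil => trivial
  | cons i l ih =>
    refine ⟨ih G fun t => (h t).1, fun x _ => ?_⟩
    rw [mixedD_map_castSucc, pdAt_castSucc_comp_init_iff (fun t => mixedD l (G t))]
    exact (h _).2 _ (mem_univ _)

end LastCoordinate

theorem mixedD_singleton {n : ℕ} (i : Fin n) (F : (Fin n → ℝ) → ℝ) : mixedD [i] F = pd i F :=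
  rfl

theorem mixedD_append {n : ℕ} (l₁ l₂ : List (Fin n)) (F : (Fin n → ℝ) → ℝ) :
    mixedD (l₁ ++ l₂) F = mixedD l₁ (mixedD l₂ F) := by
  induction l₁ with
  | nil => rfl
  | cons i l ih => exact congrArg (pd i) ih

theorem MixedDiffOn.append {n : ℕ} {l₁ l₂ : List (Fin n)} {F : (Fin n → ℝ) → ℝ}
    {s : Set (Fin n → ℝ)} (h₂ : MixedDiffOn l₂ F s) (h₁ : MixedDiffOn l₁ (mixedD l₂ F) s) :
    MixedDiffOn (l₁ ++ l₂) F s := by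
  induction l₁ with
  | nil => exact h₂
  | cons i l ih =>
    refine ⟨ih h₁.1, fun x hx => ?_⟩
    change PdAt i (mixedD (l ++ l₂) F) x
    rw [mixedD_append]
    exact h₁.2 x hx

theorem MixedDiffOn.mono {n : ℕ} {l : List (Fin n)} {F : (Fin n → ℝ) → ℝ}
    {s t : Set (Fin n → ℝ)} (h : MixedDiffOn l F s) (hts : t ⊆ s) : MixedDiffOn l F t := by
  induction l with
  | nil => trivial
  | cons i l ih => exact ⟨ih h.1, fun x hx => h.2 x (hts hx)⟩

theorem mixedD_finRange_iterInt {n : ℕ} {f : (Fin n → ℝ) → ℝ} (hf : Continuous f)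
    (a : Fin n → ℝ) : mixedD (List.finRange n) (iterInt n f a) = f := by
  induction n with
  | zero => funext x; exact congrArg f (Subsingleton.elim _ _)
  | succ n ih =>
    funext x
    rw [List.finRange_succ_last, mixedD_append, mixedD_singleton, pd_last_iterInt hf a,
      mixedD_map_castSucc (fun t => iterInt n (fun u => f (snoc u t)) _)]
    beta_reduce
    rw [ih (by fun_prop)]
    exact congrArg f (snoc_init_self x)

theorem mixedDiffOn_finRange_iterInt {n : ℕ} {f : (Fin n → ℝ) → ℝ} (hf : Continuous f)
    (a : Fin n → ℝ) : MixedDiffOn (List.finRange n) (iterInt n f a) univ := by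
  induction n with
  | zero => trivial
  | succ n ih =>
    rw [List.finRange_succ_last]
    refine MixedDiffOn.append ⟨trivial, fun x _ => pdAt_last_iterInt hf a x⟩ ?_
    rw [mixedD_singleton, pd_last_iterInt hf a]
    exact mixedDiffOn_map_castSucc (fun t => iterInt n (fun u => f (snoc u t)) _) _
      fun t => ih (by fun_prop) _

theorem eqOn_iterInt {n : ℕ} {f g : (Fin n → ℝ) → ℝ} {a b : Fin n → ℝ} (h : EqOn f g (Icc a b)) :
    EqOn (iterInt n f a) (iterInt n g a) (Icc a b) := by
  induction n with
  | zero => exact fun x _ => h ⟨fun i => i.elim0, fun i => i.elim0⟩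
  | succ n ih =>
    intro x hx
    refine intervalIntegral.integral_congr fun t ht => ?_
    rw [uIcc_of_le (hx.1 (last n))] at ht
    refine ih (b := init b) (fun u hu => h (snoc_mem_Icc hu ⟨ht.1, ht.2.trans (hx.2 (last n))⟩))
      ⟨fun i => hx.1 i.castSucc, fun i => hx.2 i.castSucc⟩

theorem eventuallyEq_update_of_eqOn {ι α β : Type*} [DecidableEq ι] [TopologicalSpace α]
    {U : Set (ι → α)} {F F' : (ι → α) → β} (hU : IsOpen U) (h : EqOn F F' U) {x : ι → α}
    (hx : x ∈ U) (i : ι) : (fun t => F (update x i t)) =ᶠ[𝓝 (x i)] fun t => F' (update x i t) := by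
  have hcont : ContinuousAt (update x i) (x i) :=
    (continuous_const.update i continuous_id).continuousAt
  have hU' : U ∈ 𝓝 (update x i (x i)) := by rw [update_eq_self]; exact hU.mem_nhds hx
  filter_upwards [hcont.preimage_mem_nhds hU'] with t ht using h ht

section Locality

variable {n : ℕ} {U : Set (Fin n → ℝ)} {F F' : (Fin n → ℝ) → ℝ}

theorem pd_eqOn_of_eqOn (hU : IsOpen U) (h : EqOn F F' U) (i : Fin n) :
    EqOn (pd i F) (pd i F') U :=
  fun _ hx => (eventuallyEq_update_of_eqOn hU h hx i).deriv_eq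

theorem PdAt.congr_of_eqOn {i : Fin n} {x : Fin n → ℝ} (h' : PdAt i F' x) (hU : IsOpen U)
    (h : EqOn F F' U) (hx : x ∈ U) : PdAt i F x :=
  DifferentiableAt.congr_of_eventuallyEq h' (eventuallyEq_update_of_eqOn hU h hx i)

theorem mixedD_eqOn_of_eqOn (hU : IsOpen U) (h : EqOn F F' U) (l : List (Fin n)) :
    EqOn (mixedD l F) (mixedD l F') U := by
  induction l with
  | nil => exact h
  | cons i l ih => exact pd_eqOn_of_eqOn hU ih i

theorem MixedDiffOn.congr_of_eqOn {l : List (Fin n)} (h' : MixedDiffOn l F' U) (hU : IsOpen U)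
    (h : EqOn F F' U) : MixedDiffOn l F U := by
  induction l with
  | nil => trivial
  | cons i l ih =>
    exact ⟨ih h'.1, fun x hx => (h'.2 x hx).congr_of_eqOn hU (mixedD_eqOn_of_eqOn hU h l) hx⟩

end Locality

theorem iteratedIntegral_mixedPartial_general (n : ℕ) (a b : Fin n → ℝ)
    (f : (Fin n → ℝ) → ℝ) (hf : ContinuousOn f (Set.Icc a b)) :
    MixedDiffOn (List.finRange n) (iterInt n f a)
        (Set.pi Set.univ fun j => Set.Ioo (a j) (b j)) ∧
      ContinuousOn (mixedD (List.finRange n) (iterInt n f a))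
        (Set.pi Set.univ fun j => Set.Ioo (a j) (b j)) ∧
      ∀ x ∈ Set.pi Set.univ fun j => Set.Ioo (a j) (b j),
        mixedD (List.finRange n) (iterInt n f a) x = f x := by
  set U := Set.pi Set.univ fun j => Set.Ioo (a j) (b j)
  have hU : IsOpen U := isOpen_set_pi finite_univ fun _ _ => isOpen_Ioo
  have hUI : U ⊆ Icc a b := pi_univ_Icc a b ▸ pi_mono fun _ _ => Ioo_subset_Icc_self
  obtain ⟨g, hg, hgf⟩ := hf.exists_continuous_eqOn isClosed_Icc
  have hfg : EqOn (iterInt n f a) (iterInt n g a) U := (eqOn_iterInt hgf.symm).mono hUI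
  have hmixed : EqOn (mixedD (List.finRange n) (iterInt n f a)) f U := fun x hx => by
    rw [mixedD_eqOn_of_eqOn hU hfg _ hx, mixedD_finRange_iterInt hg, hgf (hUI hx)]
  exact ⟨((mixedDiffOn_finRange_iterInt hg a).mono (subset_univ U)).congr_of_eqOn hU hfg,
    (hf.mono hUI).congr hmixed, hmixed⟩

/-- Let `I = ∏_{j=1}^n [a_j, b_j]` with `a_j < b_j` for all `j`, let
`I̊ = ∏_{j=1}^n (a_j, b_j)` be its interior, and let `f : I → ℝ` be continuous. Define
`F(x) = ∫_{a_n}^{x_n} ⋯ ∫_{a_1}^{x_1} f(u) du_1 ⋯ du_n`. Then on `I̊` the mixed partial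
derivative `∂_1 ∂_2 ⋯ ∂_n F` (taken successively, first in the `n`-th variable, then the
`(n−1)`-st, and so on down to the first) exists, is continuous on `I̊`, and satisfies
`∂_1 ⋯ ∂_n F = f` on `I̊`. -/
theorem iteratedIntegral_mixedPartial (n : ℕ) (a b : Fin n → ℝ) (hab : ∀ j, a j < b j)
    (f : (Fin n → ℝ) → ℝ) (hf : ContinuousOn f (Set.Icc a b)) :
    MixedDiffOn (List.finRange n) (iterInt n f a)
        (Set.pi Set.univ fun j => Set.Ioo (a j) (b j)) ∧
      ContinuousOn (mixedD (List.finRange n) (iterInt n f a))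
        (Set.pi Set.univ fun j => Set.Ioo (a j) (b j)) ∧
      ∀ x ∈ Set.pi Set.univ fun j => Set.Ioo (a j) (b j),
        mixedD (List.finRange n) (iterInt n f a) x = f x :=
  iteratedIntegral_mixedPartial_general n a b f hf
end

section
/- Let I = ∏_{j=1}^n [a_j,b_j] with a_j < b_j, let f : I → ℝ be continuous, and let F, F̃ : I → ℝ both be continuous functions whose mixed partial derivatives ∂_1 ⋯ ∂_n F and ∂_1 ⋯ ∂_n F̃ exist on the interior I̊ = ∏_{j=1}^n (a_j,b_j) and both equal f there. Then the combinatorial formula gives the same value for both: ∑_{s ∈ {0,1}^n} (−1)^{#_0(s)} F(P_s) = ∑_{s ∈ {0,1}^n} (−1)^{#_0(s)} F̃(P_s), where P_s is the vertex of I with j-th coordinate b_j if s_j = 1 and a_j if s_j = 0, and #_0(s) is the number of zeros in s. -/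
open MeasureTheory

/-!
Write `Δ_S G` for the alternating sum of `G` over the vertices of a box `[c, d]` in the coordinate
directions `S`. If `Δ_S ∂_i ∂_m F = Δ_S ∂_i ∂_m F'` on the box and `i ∉ S`, then along the `i`-th
coordinate the function `Δ_S ∂_m F - Δ_S ∂_m F'` has derivative zero, so it takes the same value at
`c i` and `d i`; that is, `Δ_{S ∪ {i}} ∂_m F = Δ_{S ∪ {i}} ∂_m F'`. Starting from `S = ∅` and
trading the derivatives `∂_1, …, ∂_n` for differences in this way, outermost first, gives equal
vertex sums for `F` and `F'` on every box strictly inside `I`; continuity on `I` lets the box grow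
to `I`.
-/

open Finset Function

section BoxDiff

variable {ι : Type*} [DecidableEq ι] (c d : ι → ℝ)

/-- Coordinates in `T` are taken from `d`, those in `S \ T` from `c`, the others from `x`. -/
noncomputable def boxDiff (S : Finset ι) (G : (ι → ℝ) → ℝ) (x : ι → ℝ) : ℝ :=
  ∑ T ∈ S.powerset, (-1 : ℝ) ^ (S \ T).card * G (T.piecewise d (S.piecewise c x))

@[simp]
lemma boxDiff_empty (G : (ι → ℝ) → ℝ) : boxDiff c d ∅ G = G := by
  ext; simp [boxDiff]

lemma boxDiff_insert {S : Finset ι} {i : ι} (hi : i ∉ S) (G : (ι → ℝ) → ℝ) (x : ι → ℝ) :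
    boxDiff c d (insert i S) G x =
      boxDiff c d S G (update x i (d i)) - boxDiff c d S G (update x i (c i)) := by
  rw [boxDiff, sum_powerset_insert hi, boxDiff, boxDiff, sub_eq_add_neg, add_comm,
    ← sum_neg_distrib]
  congr 1
  · refine sum_congr rfl fun T hT => ?_
    have hiT : i ∉ T := fun h => hi (mem_powerset.1 hT h)
    rw [insert_sdiff_insert, sdiff_insert_of_notMem hi, piecewise_insert, piecewise_insert,
      update_piecewise_of_notMem (hi := hiT), update_idem, update_piecewise_of_notMem (hi := hi)]
  · refine sum_congr rfl fun T hT => ?_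
    have hiT : i ∉ T := fun h => hi (mem_powerset.1 hT h)
    rw [insert_sdiff_of_notMem _ hiT, card_insert_of_notMem (by simp [hi]), piecewise_insert,
      update_piecewise_of_notMem (hi := hi), pow_succ]
    ring

variable [Fintype ι]

noncomputable def vertexSum (H : (ι → ℝ) → ℝ) : ℝ :=
  ∑ s : ι → Bool, (-1 : ℝ) ^ (univ.filter fun j => s j = false).card *
    H (fun j => if s j then d j else c j)

lemma boxDiff_univ (H : (ι → ℝ) → ℝ) (x : ι → ℝ) : boxDiff c d univ H x = vertexSum c d H := by
  rw [boxDiff, vertexSum, powerset_univ, piecewise_univ]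
  refine sum_nbij' (fun T j => decide (j ∈ T)) (fun s => univ.filter fun j => s j = true)
    (by simp) (by simp) (by intro T _; ext; simp) (by intro s _; ext; simp) fun T _ => ?_
  congr 2
  · congr 1; ext; simp
  · ext j; simp [piecewise]

end BoxDiff

lemma vertexSum_eq_of_forall_lt {ι : Type*} [Fintype ι] [DecidableEq ι] {a b : ι → ℝ}
    (hab : ∀ j, a j < b j) {H H' : (ι → ℝ) → ℝ}
    (hH : ContinuousOn H (Set.Icc a b)) (hH' : ContinuousOn H' (Set.Icc a b))
    (h : ∀ c d : ι → ℝ, (∀ j, a j < c j) → c ≤ d → (∀ j, d j < b j) →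
      vertexSum c d H = vertexSum c d H') :
    vertexSum a b H = vertexSum a b H' := by
  set lo : ℝ → ι → ℝ := fun ε j => a j + ε * (b j - a j)
  set hi : ℝ → ι → ℝ := fun ε j => b j - ε * (b j - a j)
  have hcont : ∀ K : (ι → ℝ) → ℝ, ContinuousOn K (Set.Icc a b) →
      ContinuousOn (fun ε => vertexSum (lo ε) (hi ε) K) (Set.Icc 0 (1 / 2)) := by
    intro K hK
    refine continuousOn_finsetSum _ fun s _ => continuousOn_const.mul (hK.comp ?_ ?_)
    · exact (continuous_pi fun j => by split_ifs <;> fun_prop).continuousOn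
    · rintro ε ⟨hε₀, hε₁⟩
      constructor <;> intro j <;> have := hab j <;> simp only [lo, hi] <;> split_ifs <;>
        nlinarith
  have heq : Set.EqOn (fun ε => vertexSum (lo ε) (hi ε) H) (fun ε => vertexSum (lo ε) (hi ε) H')
      (Set.Ioo 0 (1 / 2)) := by
    rintro ε ⟨hε₀, hε₁⟩
    refine h _ _ (fun j => ?_) (fun j => ?_) (fun j => ?_) <;>
      · have := hab j
        simp only [lo, hi]
        nlinarith
  simpa [lo, hi] using heq.of_subset_closure (hcont H hH) (hcont H' hH') Set.Ioo_subset_Icc_self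
    (by rw [closure_Ioo (by norm_num)]) (Set.left_mem_Icc.2 (by norm_num))

section MixedPartials

variable {n : ℕ} {c d : Fin n → ℝ}

lemma PdAt.hasDerivAt_update {i : Fin n} {G : (Fin n → ℝ) → ℝ} {y : Fin n → ℝ} {t : ℝ}
    (h : PdAt i G (update y i t)) :
    HasDerivAt (fun u => G (update y i u)) (pd i G (update y i t)) t := by
  simpa [PdAt, pd] using h.hasDerivAt

lemma MixedDiffOn.of_append {l₁ l₂ : List (Fin n)} {F : (Fin n → ℝ) → ℝ} {U : Set (Fin n → ℝ)}
    (h : MixedDiffOn (l₁ ++ l₂) F U) : MixedDiffOn l₂ F U := by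
  induction l₁ with
  | nil => exact h
  | cons i l₁ ih => exact ih h.1

lemma hasDerivAt_boxDiff_update {S : Finset (Fin n)} {i : Fin n} (hi : i ∉ S) (hcd : c ≤ d)
    {G : (Fin n → ℝ) → ℝ} (hG : ∀ y ∈ Set.Icc c d, PdAt i G y) {x : Fin n → ℝ} {t : ℝ}
    (hx : update x i t ∈ Set.Icc c d) :
    HasDerivAt (fun u => boxDiff c d S G (update x i u))
      (boxDiff c d S (pd i G) (update x i t)) t := by
  unfold boxDiff
  refine HasDerivAt.fun_sum fun T hT => HasDerivAt.const_mul _ ?_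
  have hiT : i ∉ T := fun h => hi (mem_powerset.1 hT h)
  simp only [← update_piecewise_of_notMem (hi := hi), ← update_piecewise_of_notMem (hi := hiT)]
  refine PdAt.hasDerivAt_update (hG _ ?_)
  rw [update_piecewise_of_notMem (hi := hiT), update_piecewise_of_notMem (hi := hi)]
  exact piecewise_mem_Icc_of_mem_of_mem _ (Set.right_mem_Icc.2 hcd)
    (piecewise_mem_Icc_of_mem_of_mem _ (Set.left_mem_Icc.2 hcd) hx)

lemma boxDiff_insert_eqOn_of_pd {S : Finset (Fin n)} {i : Fin n} (hi : i ∉ S) (hcd : c ≤ d)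
    {G G' : (Fin n → ℝ) → ℝ} (hG : ∀ y ∈ Set.Icc c d, PdAt i G y)
    (hG' : ∀ y ∈ Set.Icc c d, PdAt i G' y)
    (h : Set.EqOn (boxDiff c d S (pd i G)) (boxDiff c d S (pd i G')) (Set.Icc c d)) :
    Set.EqOn (boxDiff c d (insert i S) G) (boxDiff c d (insert i S) G') (Set.Icc c d) := by
  intro x hx
  have hupdate : ∀ t ∈ Set.uIcc (c i) (d i), update x i t ∈ Set.Icc c d := fun t ht => by
    rw [Set.uIcc_of_le (hcd i)] at ht
    rw [← Set.pi_univ_Icc] at hx ⊢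
    exact (Set.update_mem_pi_iff_of_mem hx).2 fun _ => ht
  have hconst : ∀ t ∈ Set.uIcc (c i) (d i), HasDerivAt
      (fun u => boxDiff c d S G (update x i u) - boxDiff c d S G' (update x i u)) 0 t :=
    fun t ht => by
      have := (hasDerivAt_boxDiff_update hi hcd hG (hupdate t ht)).sub
        (hasDerivAt_boxDiff_update hi hcd hG' (hupdate t ht))
      rwa [h (hupdate t ht), sub_self] at this
  have := intervalIntegral.integral_eq_sub_of_hasDerivAt hconst (by simp)
  rw [boxDiff_insert _ _ hi, boxDiff_insert _ _ hi]
  simp only [intervalIntegral.integral_zero] at this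
  linarith

lemma boxDiff_mixedD_eqOn {U : Set (Fin n → ℝ)} (hcd : c ≤ d) (hU : Set.Icc c d ⊆ U)
    {F F' : (Fin n → ℝ) → ℝ} (p : List (Fin n)) (hp : p.Nodup) (m : List (Fin n))
    (hF : MixedDiffOn (p ++ m) F U) (hF' : MixedDiffOn (p ++ m) F' U)
    (h : Set.EqOn (mixedD (p ++ m) F) (mixedD (p ++ m) F') U) :
    Set.EqOn (boxDiff c d p.toFinset (mixedD m F)) (boxDiff c d p.toFinset (mixedD m F'))
      (Set.Icc c d) := by
  induction p using List.reverseRecOn generalizing m with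
  | nil => simpa using h.mono hU
  | append_singleton p i ih =>
    obtain ⟨hip, hp⟩ := (List.nodup_concat p i).1 (by simpa using hp)
    have hinsert : (p ++ [i]).toFinset = insert i p.toFinset := by ext; simp
    rw [List.append_assoc, List.singleton_append] at hF hF' h
    rw [hinsert]
    exact boxDiff_insert_eqOn_of_pd (by simpa using hip) hcd
      (fun y hy => hF.of_append.2 y (hU hy)) (fun y hy => hF'.of_append.2 y (hU hy))
      (ih hp (i :: m) hF hF' h)

end MixedPartials

theorem alternating_vertex_sum_welldefined_for_antiderivatives_general (n : ℕ) (a b : Fin n → ℝ)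
    (hab : ∀ j, a j < b j) (f F F' : (Fin n → ℝ) → ℝ)
    (hF : ContinuousOn F (Set.Icc a b))
    (hF' : ContinuousOn F' (Set.Icc a b))
    (hdiffF : MixedDiffOn (List.finRange n) F (Set.pi Set.univ fun j => Set.Ioo (a j) (b j)))
    (hdiffF' : MixedDiffOn (List.finRange n) F' (Set.pi Set.univ fun j => Set.Ioo (a j) (b j)))
    (hpdeF : ∀ x ∈ Set.pi Set.univ fun j => Set.Ioo (a j) (b j),
      mixedD (List.finRange n) F x = f x)
    (hpdeF' : ∀ x ∈ Set.pi Set.univ fun j => Set.Ioo (a j) (b j),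
      mixedD (List.finRange n) F' x = f x) :
    ∑ s : Fin n → Bool,
        (-1 : ℝ) ^ (Finset.univ.filter fun j => s j = false).card *
          F (fun j => if s j then b j else a j) =
      ∑ s : Fin n → Bool,
        (-1 : ℝ) ^ (Finset.univ.filter fun j => s j = false).card *
          F' (fun j => if s j then b j else a j) := by
  change vertexSum a b F = vertexSum a b F'
  refine vertexSum_eq_of_forall_lt hab hF hF' fun c d hac hcd hdb => ?_
  have hU : Set.Icc c d ⊆ Set.pi Set.univ fun j => Set.Ioo (a j) (b j) :=
    fun y hy j _ => ⟨(hac j).trans_le (hy.1 j), (hy.2 j).trans_lt (hdb j)⟩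
  have hvertex := boxDiff_mixedD_eqOn hcd hU (List.finRange n) (List.nodup_finRange n) []
    (by simpa using hdiffF) (by simpa using hdiffF')
    (fun x hx => by simp [hpdeF x hx, hpdeF' x hx]) (Set.left_mem_Icc.2 hcd)
  simpa [boxDiff_univ, mixedD] using hvertex

/-- Let `I = ∏_{j=1}^n [a_j,b_j]` with `a_j < b_j`, let `f : I → ℝ` be
continuous, and let `F, F̃ : I → ℝ` both be continuous functions whose mixed partial
derivatives `∂_1 ⋯ ∂_n F` and `∂_1 ⋯ ∂_n F̃` exist on the interior `I̊` and both equal `f`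
there. Then the combinatorial formula gives the same value for both:
`∑_{s} (−1)^{#_0(s)} F(P_s) = ∑_{s} (−1)^{#_0(s)} F̃(P_s)`. -/
theorem alternating_vertex_sum_welldefined_for_antiderivatives (n : ℕ) (a b : Fin n → ℝ)
    (hab : ∀ j, a j < b j) (f F F' : (Fin n → ℝ) → ℝ)
    (hf : ContinuousOn f (Set.Icc a b))
    (hF : ContinuousOn F (Set.Icc a b))
    (hF' : ContinuousOn F' (Set.Icc a b))
    (hdiffF : MixedDiffOn (List.finRange n) F (Set.pi Set.univ fun j => Set.Ioo (a j) (b j)))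
    (hdiffF' : MixedDiffOn (List.finRange n) F' (Set.pi Set.univ fun j => Set.Ioo (a j) (b j)))
    (hpdeF : ∀ x ∈ Set.pi Set.univ fun j => Set.Ioo (a j) (b j),
      mixedD (List.finRange n) F x = f x)
    (hpdeF' : ∀ x ∈ Set.pi Set.univ fun j => Set.Ioo (a j) (b j),
      mixedD (List.finRange n) F' x = f x) :
    ∑ s : Fin n → Bool,
        (-1 : ℝ) ^ (Finset.univ.filter fun j => s j = false).card *
          F (fun j => if s j then b j else a j) =
      ∑ s : Fin n → Bool,
        (-1 : ℝ) ^ (Finset.univ.filter fun j => s j = false).card *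
          F' (fun j => if s j then b j else a j) :=
  alternating_vertex_sum_welldefined_for_antiderivatives_general n a b hab f F F' hF hF' hdiffF
    hdiffF' hpdeF hpdeF'
end

section
/- Let P, Q, R ∈ ℝ² be affinely independent points, let S = Q + R − P, and let Π be the parallelogram with vertices P, Q, S, R (the convex hull of {P, Q, S, R}). Let f be continuous on Π and suppose f is symmetric under the point reflection through the midpoint of the segment QR, i.e. f(Q + R − z) = f(z) for all z ∈ Π. Let φ : [0,1]² → Π be the affine map with φ(0,0) = P, φ(1,0) = Q, φ(0,1) = R, φ(1,1) = S, and let F : [0,1]² → ℝ be an antiderivative on [0,1]² of the function x ↦ f(φ(x)) · |det Dφ|, i.e. F is continuous and ∂_x ∂_y F exists on (0,1)² and equals f(φ(x,y)) · |det Dφ| there. Then the integral of f over the triangle with vertices P, Q, R satisfies ∫_{PQR} f(x,y) dx dy = ½ ( F(1,1) − F(1,0) + F(0,0) − F(0,1) ). -/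
open MeasureTheory

/-- The partial derivative of `F : ℝ × ℝ → ℝ` with respect to its second variable. -/
noncomputable def pdy (F : ℝ × ℝ → ℝ) : ℝ × ℝ → ℝ :=
  fun p => deriv (fun v : ℝ => F (p.1, v)) p.2

/-- The partial derivative of `G : ℝ × ℝ → ℝ` with respect to its first variable. -/
noncomputable def pdx (G : ℝ × ℝ → ℝ) : ℝ × ℝ → ℝ :=
  fun p => deriv (fun u : ℝ => G (u, p.2)) p.1

/-! The affine map `φ` carries the unit square onto the parallelogram and the triangle
`x, y ≥ 0, x + y ≤ 1` onto `PQR`, and it conjugates `p ↦ (1, 1) - p` to the point reflection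
`z ↦ Q + R - z`. By the change of variables formula and this symmetry, the integral over `PQR` is
half the integral of `f ∘ φ · |det Dφ| = ∂ₓ∂ᵧF` over the square. The latter is computed by the
fundamental theorem of calculus, in `x` to recover `∂ᵧF` and then in `y`, over the strips
`[a, b] × [0, 1]` with `0 < a < b < 1`, where `∂ᵧF` exists; both sides are continuous in `(a, b)`
up to the boundary, so the identity survives the limit `a → 0`, `b → 1`. -/

open Set

theorem exists_continuous_eqOn_Icc_prod_Icc {β : Type*} [TopologicalSpace β] {a b c d : ℝ}
    {g : ℝ × ℝ → β} (hab : a ≤ b) (hcd : c ≤ d) (hg : ContinuousOn g (Icc a b ×ˢ Icc c d)) :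
    ∃ G : ℝ × ℝ → β, Continuous G ∧ EqOn G g (Icc a b ×ˢ Icc c d) := by
  refine ⟨fun p => g (projIcc a b hab p.1, projIcc c d hcd p.2), ?_, ?_⟩
  · exact hg.comp_continuous (by fun_prop (disch := skip) [continuous_projIcc]) fun p =>
      ⟨(projIcc a b hab p.1).2, (projIcc c d hcd p.2).2⟩
  · rintro ⟨x, y⟩ ⟨hx, hy⟩
    simp [projIcc_of_mem _ hx, projIcc_of_mem _ hy]

section MixedPartial

variable {a b c d : ℝ} {g F : ℝ × ℝ → ℝ}

theorem intervalIntegral_eq_pdy_sub_pdy (hg : Continuous g)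
    (hdx : ∀ p ∈ Ioo a b ×ˢ Ioo c d, DifferentiableAt ℝ (fun u => pdy F (u, p.2)) p.1)
    (hpde : ∀ p ∈ Ioo a b ×ˢ Ioo c d, pdx (pdy F) p = g p)
    {y a' b' : ℝ} (hy : y ∈ Ioo c d) (ha' : a' ∈ Ioo a b) (hb' : b' ∈ Ioo a b) :
    ∫ x in a'..b', g (x, y) = pdy F (b', y) - pdy F (a', y) := by
  refine intervalIntegral.integral_eq_sub_of_hasDerivAt (f := fun x => pdy F (x, y))
    (fun x hx => ?_) ((by fun_prop : Continuous fun x => g (x, y)).intervalIntegrable _ _)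
  have hxy : (x, y) ∈ Ioo a b ×ˢ Ioo c d := ⟨ordConnected_Ioo.uIcc_subset ha' hb' hx, hy⟩
  rw [← hpde _ hxy]
  exact (hdx _ hxy).hasDerivAt

theorem intervalIntegral_intervalIntegral_eq_of_pdx_pdy (hcd : c ≤ d) (hg : Continuous g)
    (hF : ContinuousOn F (Icc a b ×ˢ Icc c d))
    (hdy : ∀ p ∈ Ioo a b ×ˢ Ioo c d, DifferentiableAt ℝ (fun v => F (p.1, v)) p.2)
    (hdx : ∀ p ∈ Ioo a b ×ˢ Ioo c d, DifferentiableAt ℝ (fun u => pdy F (u, p.2)) p.1)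
    (hpde : ∀ p ∈ Ioo a b ×ˢ Ioo c d, pdx (pdy F) p = g p)
    {a' b' : ℝ} (ha' : a' ∈ Ioo a b) (hb' : b' ∈ Ioo a b) :
    ∫ y in c..d, ∫ x in a'..b', g (x, y) = F (b', d) - F (a', d) - (F (b', c) - F (a', c)) := by
  have hFx : ∀ x ∈ Ioo a b, ContinuousOn (fun y => F (x, y)) (Icc c d) := fun x hx =>
    hF.comp (by fun_prop) fun y hy => ⟨Ioo_subset_Icc_self hx, hy⟩
  refine intervalIntegral.integral_eq_sub_of_hasDerivAt_of_le hcd ((hFx b' hb').sub (hFx a' ha'))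
    (fun y hy => ?_) ?_
  · rw [intervalIntegral_eq_pdy_sub_pdy hg hdx hpde hy ha' hb']
    exact (hdy (b', y) ⟨hb', hy⟩).hasDerivAt.sub (hdy (a', y) ⟨ha', hy⟩).hasDerivAt
  · exact Continuous.intervalIntegrable (by fun_prop) _ _

theorem setIntegral_Icc_prod_Icc_eq_intervalIntegral_intervalIntegral (hab : a ≤ b)
    (hcd : c ≤ d) (hg : Continuous g) :
    ∫ p in Icc a b ×ˢ Icc c d, g p = ∫ y in c..d, ∫ x in a..b, g (x, y) := by
  have hint : IntegrableOn (fun z => g z.swap) (Icc c d ×ˢ Icc a b) (volume.prod volume) :=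
    (hg.comp continuous_swap).continuousOn.integrableOn_compact (isCompact_Icc.prod isCompact_Icc)
  rw [Measure.volume_eq_prod, ← setIntegral_prod_swap, setIntegral_prod _ hint,
    intervalIntegral.integral_of_le hcd, ← integral_Icc_eq_integral_Ioc]
  refine setIntegral_congr_fun measurableSet_Icc fun y _ => ?_
  rw [intervalIntegral.integral_of_le hab, ← integral_Icc_eq_integral_Ioc]
  rfl

theorem setIntegral_Icc_prod_Icc_eq_of_pdx_pdy_of_continuous (hab : a < b) (hcd : c ≤ d)
    (hg : Continuous g) (hF : ContinuousOn F (Icc a b ×ˢ Icc c d))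
    (hdy : ∀ p ∈ Ioo a b ×ˢ Ioo c d, DifferentiableAt ℝ (fun v => F (p.1, v)) p.2)
    (hdx : ∀ p ∈ Ioo a b ×ˢ Ioo c d, DifferentiableAt ℝ (fun u => pdy F (u, p.2)) p.1)
    (hpde : ∀ p ∈ Ioo a b ×ˢ Ioo c d, pdx (pdy F) p = g p) :
    ∫ p in Icc a b ×ˢ Icc c d, g p = F (b, d) - F (a, d) - F (b, c) + F (a, c) := by
  set Ψ : ℝ × ℝ → ℝ := fun q => ∫ y in c..d, ∫ x in q.1..q.2, g (x, y)
  set k : ℝ → ℝ := fun x => F (x, d) - F (x, c)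
  set Φ : ℝ × ℝ → ℝ := fun q => k q.2 - k q.1
  have hΨ : Continuous Ψ := by
    have hsub : ∀ (q : ℝ × ℝ) y, ∫ x in q.1..q.2, g (x, y) =
        (∫ x in 0..q.2, g (x, y)) - ∫ x in 0..q.1, g (x, y) := fun q y =>
      (intervalIntegral.integral_interval_sub_left
        ((by fun_prop : Continuous fun x => g (x, y)).intervalIntegrable _ _)
        ((by fun_prop : Continuous fun x => g (x, y)).intervalIntegrable _ _)).symm
    simp only [Ψ, hsub]
    fun_prop
  have hk : ContinuousOn k (Icc a b) :=
    have hFy : ∀ y ∈ Icc c d, ContinuousOn (fun x => F (x, y)) (Icc a b) := fun y hy =>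
      hF.comp (by fun_prop) fun x hx => ⟨hx, hy⟩
    (hFy d (right_mem_Icc.2 hcd)).sub (hFy c (left_mem_Icc.2 hcd))
  have hΨΦ : EqOn Ψ Φ (Icc a b ×ˢ Icc a b) := by
    refine EqOn.of_subset_closure (fun q hq => ?_) hΨ.continuousOn
      ((hk.comp continuousOn_snd fun q hq => hq.2).sub (hk.comp continuousOn_fst fun q hq => hq.1))
      (prod_mono Ioo_subset_Icc_self Ioo_subset_Icc_self)
      (by rw [closure_prod_eq, closure_Ioo hab.ne])
    simp only [Ψ, Φ, k,
      intervalIntegral_intervalIntegral_eq_of_pdx_pdy hcd hg hF hdy hdx hpde hq.1 hq.2]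
    ring
  rw [setIntegral_Icc_prod_Icc_eq_intervalIntegral_intervalIntegral hab.le hcd hg]
  exact (hΨΦ (x := (a, b)) ⟨left_mem_Icc.2 hab.le, right_mem_Icc.2 hab.le⟩).trans (by ring)

theorem setIntegral_Icc_prod_Icc_eq_of_pdx_pdy (hab : a < b) (hcd : c ≤ d)
    (hg : ContinuousOn g (Icc a b ×ˢ Icc c d)) (hF : ContinuousOn F (Icc a b ×ˢ Icc c d))
    (hdy : ∀ p ∈ Ioo a b ×ˢ Ioo c d, DifferentiableAt ℝ (fun v => F (p.1, v)) p.2)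
    (hdx : ∀ p ∈ Ioo a b ×ˢ Ioo c d, DifferentiableAt ℝ (fun u => pdy F (u, p.2)) p.1)
    (hpde : ∀ p ∈ Ioo a b ×ˢ Ioo c d, pdx (pdy F) p = g p) :
    ∫ p in Icc a b ×ˢ Icc c d, g p = F (b, d) - F (a, d) - F (b, c) + F (a, c) := by
  obtain ⟨G, hGc, hGg⟩ := exists_continuous_eqOn_Icc_prod_Icc hab.le hcd hg
  rw [← setIntegral_congr_fun (measurableSet_Icc.prod measurableSet_Icc) hGg]
  refine setIntegral_Icc_prod_Icc_eq_of_pdx_pdy_of_continuous hab hcd hGc hF hdy hdx fun p hp => ?_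
  rw [hpde p hp, hGg (prod_mono Ioo_subset_Icc_self Ioo_subset_Icc_self hp)]

end MixedPartial

def unitTriangle : Set (ℝ × ℝ) := {p | 0 ≤ p.1 ∧ 0 ≤ p.2 ∧ p.1 + p.2 ≤ 1}

theorem measurableSet_unitTriangle : MeasurableSet unitTriangle := by
  unfold unitTriangle
  measurability

theorem convexHull_unitTriangle_vertices :
    convexHull ℝ {((0 : ℝ), (0 : ℝ)), (1, 0), (0, 1)} = unitTriangle := by
  refine Subset.antisymm (convexHull_min ?_ ?_) ?_
  · rintro p (rfl | rfl | rfl) <;> norm_num [unitTriangle]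
  · rintro x ⟨hx₁, hx₂, hx₃⟩ y ⟨hy₁, hy₂, hy₃⟩ s t hs ht hst
    refine ⟨?_, ?_, ?_⟩ <;> simp only [Prod.fst_add, Prod.snd_add, smul_eq_mul, Prod.smul_fst,
      Prod.smul_snd] <;> nlinarith
  · rintro ⟨x, y⟩ ⟨hx, hy, hxy⟩
    convert (convex_convexHull ℝ ({(0, 0), (1, 0), (0, 1)} : Set (ℝ × ℝ))).sum_mem
      (t := Finset.univ) (w := ![1 - x - y, x, y]) (z := ![(0, 0), (1, 0), (0, 1)])
      (fun i _ => ?_) ?_ (fun i _ => ?_) using 1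
    · simp [Fin.sum_univ_three]
    · fin_cases i <;> simp <;> linarith
    · simp [Fin.sum_univ_three]; ring
    · fin_cases i <;> exact subset_convexHull _ _ (by simp)

theorem Icc_prod_Icc_eq_unitTriangle_union :
    Icc (0 : ℝ) 1 ×ˢ Icc (0 : ℝ) 1 = unitTriangle ∪ (fun p => (1, 1) - p) ⁻¹' unitTriangle := by
  ext ⟨x, y⟩
  simp only [unitTriangle, mem_prod, mem_Icc, mem_union, mem_preimage, mem_ofPred_eq,
    Prod.fst_sub, Prod.snd_sub]
  constructor
  · rintro ⟨⟨hx₀, hx₁⟩, hy₀, hy₁⟩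
    rcases le_total (x + y) 1 with h | h
    · exact Or.inl ⟨hx₀, hy₀, h⟩
    · exact Or.inr ⟨by linarith, by linarith, by linarith⟩
  · rintro (⟨h₁, h₂, h₃⟩ | ⟨h₁, h₂, h₃⟩) <;> refine ⟨⟨?_, ?_⟩, ?_, ?_⟩ <;> linarith

theorem volume_antidiagonal_eq_zero : volume {p : ℝ × ℝ | p.1 + p.2 = 1} = 0 := by
  rw [Measure.volume_eq_prod,
    Measure.measure_prod_null (measurableSet_eq_fun (by fun_prop) (by fun_prop))]
  refine Filter.Eventually.of_forall fun x => ?_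
  have : Prod.mk x ⁻¹' {p : ℝ × ℝ | p.1 + p.2 = 1} = {1 - x} := by
    ext y; simp [eq_sub_iff_add_eq']
  simp [this]

theorem setIntegral_unitSquare_eq_two_mul {h : ℝ × ℝ → ℝ}
    (hint : IntegrableOn h (Icc (0 : ℝ) 1 ×ˢ Icc (0 : ℝ) 1))
    (hsym : ∀ p ∈ Icc (0 : ℝ) 1 ×ˢ Icc (0 : ℝ) 1, h ((1, 1) - p) = h p) :
    ∫ p in Icc (0 : ℝ) 1 ×ˢ Icc (0 : ℝ) 1, h p = 2 * ∫ p in unitTriangle, h p := by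
  set σ : ℝ × ℝ → ℝ × ℝ := fun p => (1, 1) - p
  have hσ : MeasurePreserving σ := Measure.measurePreserving_sub_left volume (1, 1)
  have hσe : MeasurableEmbedding σ :=
    (Homeomorph.subLeft ((1, 1) : ℝ × ℝ)).measurableEmbedding
  have hsq := Icc_prod_Icc_eq_unitTriangle_union
  have hnull : AEDisjoint volume unitTriangle (σ ⁻¹' unitTriangle) := by
    refine measure_mono_null (fun p ⟨⟨_, _, h₁⟩, _, _, h₂⟩ => ?_) volume_antidiagonal_eq_zero
    simp only [σ, Prod.fst_sub, Prod.snd_sub] at h₂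
    exact (le_antisymm h₁ (by linarith) : p.1 + p.2 = 1)
  have hrefl : ∫ p in σ ⁻¹' unitTriangle, h p = ∫ p in unitTriangle, h p := by
    rw [← hσ.setIntegral_preimage_emb hσe h unitTriangle]
    refine setIntegral_congr_fun (hσe.measurable measurableSet_unitTriangle) fun p hp => ?_
    exact (hsym p (hsq ▸ Or.inr hp)).symm
  rw [hsq] at hint ⊢
  rw [setIntegral_union₀ hnull (hσe.measurable measurableSet_unitTriangle).nullMeasurableSet
    (hint.mono_set subset_union_left) (hint.mono_set subset_union_right), hrefl, two_mul]

theorem ContinuousAffineMap.setIntegral_image {E F : Type*} [NormedAddCommGroup E]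
    [NormedSpace ℝ E] [FiniteDimensional ℝ E] [MeasurableSpace E] [BorelSpace E]
    [NormedAddCommGroup F] [NormedSpace ℝ F] (μ : Measure E) [μ.IsAddHaarMeasure]
    (A : E →ᴬ[ℝ] E) (hA : Function.Injective A) {s : Set E} (hs : MeasurableSet s) (g : E → F) :
    ∫ x in A '' s, g x ∂μ = |A.contLinear.det| • ∫ x in s, g (A x) ∂μ := by
  rw [integral_image_eq_integral_abs_det_fderiv_smul μ hs (fun _ _ => A.hasFDerivWithinAt)
    hA.injOn, integral_smul]

noncomputable def parallelogramMap (P Q R : ℝ × ℝ) : (ℝ × ℝ) →ᴬ[ℝ] ℝ × ℝ :=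
  ((ContinuousLinearMap.fst ℝ ℝ ℝ).smulRight (Q - P) +
    (ContinuousLinearMap.snd ℝ ℝ ℝ).smulRight (R - P)).toContinuousAffineMap +
  ContinuousAffineMap.const ℝ _ P

section Parallelogram

variable (P Q R : ℝ × ℝ)

theorem parallelogramMap_apply (p : ℝ × ℝ) :
    parallelogramMap P Q R p = P + p.1 • (Q - P) + p.2 • (R - P) := by
  simp [parallelogramMap]; abel

theorem det_contLinear_parallelogramMap :
    (parallelogramMap P Q R).contLinear.det =
      (Q.1 - P.1) * (R.2 - P.2) - (Q.2 - P.2) * (R.1 - P.1) := by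
  rw [ContinuousLinearMap.det, ← LinearMap.det_toMatrix (Module.Basis.finTwoProd ℝ),
    Matrix.det_fin_two]
  simp [parallelogramMap, LinearMap.toMatrix_apply]
  ring

theorem parallelogramMap_one_sub (p : ℝ × ℝ) :
    parallelogramMap P Q R ((1, 1) - p) = Q + R - parallelogramMap P Q R p := by
  simp only [parallelogramMap_apply, Prod.fst_sub, Prod.snd_sub, sub_smul, one_smul]
  abel

variable {P Q R}

theorem parallelogramMap_injective (h : AffineIndependent ℝ ![P, Q, R]) :
    Function.Injective (parallelogramMap P Q R) := by
  intro p q hpq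
  have hw := h.eq_zero_of_sum_eq_zero (s := Finset.univ)
    (w := ![-(p.1 - q.1) - (p.2 - q.2), p.1 - q.1, p.2 - q.2])
    (by simp [Fin.sum_univ_three]; ring)
    (by
      rw [parallelogramMap_apply, parallelogramMap_apply] at hpq
      simp [Fin.sum_univ_three]
      linear_combination (norm := module) hpq)
  exact Prod.ext (sub_eq_zero.1 (hw 1 (by simp))) (sub_eq_zero.1 (hw 2 (by simp)))

theorem image_parallelogramMap_unitTriangle :
    parallelogramMap P Q R '' unitTriangle = convexHull ℝ {P, Q, R} := by
  rw [← convexHull_unitTriangle_vertices, ← ContinuousAffineMap.coe_toAffineMap,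
    AffineMap.image_convexHull]
  simp [image_insert_eq, parallelogramMap_apply]

theorem image_parallelogramMap_unitSquare :
    parallelogramMap P Q R '' (Icc 0 1 ×ˢ Icc 0 1) = convexHull ℝ {P, Q, Q + R - P, R} := by
  rw [← segment_eq_Icc zero_le_one, ← convexHull_pair, ← convexHull_prod,
    ← ContinuousAffineMap.coe_toAffineMap, AffineMap.image_convexHull]
  simp only [insert_prod, singleton_prod, image_insert_eq, image_singleton, image_union]
  norm_num [parallelogramMap_apply]
  rw [add_sub_assoc, insert_comm (Q + (R - P)) P, insert_comm Q P]

end Parallelogram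

/-- Let `P, Q, R ∈ ℝ²` be affinely independent, `S = Q + R − P`, and let
`Π` be the parallelogram `conv {P, Q, S, R}`. Let `f` be continuous on `Π` and symmetric
under the point reflection through the midpoint of `QR`, i.e. `f(Q + R − z) = f(z)` on `Π`.
Let `φ : [0,1]² → Π` be the affine map with `φ(0,0) = P`, `φ(1,0) = Q`, `φ(0,1) = R`,
`φ(1,1) = S`, i.e. `φ(x,y) = P + x•(Q−P) + y•(R−P)`, whose linear part has determinant
`det Dφ = (Q₁−P₁)(R₂−P₂) − (Q₂−P₂)(R₁−P₁)`, and let `F` be an antiderivative on `[0,1]²`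
of `x ↦ f(φ(x)) · |det Dφ|`: `F` is continuous and `∂_x ∂_y F` exists on `(0,1)²` and
equals `f(φ(x,y)) · |det Dφ|` there. Then the integral of `f` over the triangle `PQR`
satisfies `∫_{PQR} f = ½ (F(1,1) − F(1,0) + F(0,0) − F(0,1))`. -/
theorem integral_triangle_eq_half_alternating_vertex_sum (P Q R : ℝ × ℝ)
    (hind : AffineIndependent ℝ ![P, Q, R])
    (f F : ℝ × ℝ → ℝ)
    (hf : ContinuousOn f (convexHull ℝ {P, Q, Q + R - P, R}))
    (hsym : ∀ z ∈ convexHull ℝ ({P, Q, Q + R - P, R} : Set (ℝ × ℝ)), f (Q + R - z) = f z)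
    (φ : ℝ × ℝ → ℝ × ℝ)
    (hφdef : ∀ p : ℝ × ℝ, φ p = P + p.1 • (Q - P) + p.2 • (R - P))
    (hF : ContinuousOn F (Set.Icc (0 : ℝ) 1 ×ˢ Set.Icc (0 : ℝ) 1))
    (hdy : ∀ p ∈ Set.Ioo (0 : ℝ) 1 ×ˢ Set.Ioo (0 : ℝ) 1,
      DifferentiableAt ℝ (fun v : ℝ => F (p.1, v)) p.2)
    (hdx : ∀ p ∈ Set.Ioo (0 : ℝ) 1 ×ˢ Set.Ioo (0 : ℝ) 1,
      DifferentiableAt ℝ (fun u : ℝ => pdy F (u, p.2)) p.1)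
    (hpde : ∀ p ∈ Set.Ioo (0 : ℝ) 1 ×ˢ Set.Ioo (0 : ℝ) 1,
      pdx (pdy F) p =
        f (φ p) * |(Q.1 - P.1) * (R.2 - P.2) - (Q.2 - P.2) * (R.1 - P.1)|) :
    ∫ z in convexHull ℝ ({P, Q, R} : Set (ℝ × ℝ)), f z =
      (F (1, 1) - F (1, 0) + F (0, 0) - F (0, 1)) / 2 := by
  obtain rfl : φ = parallelogramMap P Q R :=
    funext fun p => (hφdef p).trans (parallelogramMap_apply P Q R p).symm
  have hmaps : MapsTo (parallelogramMap P Q R) (Icc 0 1 ×ˢ Icc 0 1)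
      (convexHull ℝ {P, Q, Q + R - P, R}) :=
    image_parallelogramMap_unitSquare ▸ mapsTo_image _ _
  have hg : ContinuousOn (fun p => f (parallelogramMap P Q R p) *
      |(Q.1 - P.1) * (R.2 - P.2) - (Q.2 - P.2) * (R.1 - P.1)|) (Icc 0 1 ×ˢ Icc 0 1) :=
    (hf.comp (parallelogramMap P Q R).continuous.continuousOn hmaps).mul continuousOn_const
  have hsquare := setIntegral_unitSquare_eq_two_mul
    (hg.integrableOn_compact (isCompact_Icc.prod isCompact_Icc)) fun p hp => by
      simp only [parallelogramMap_one_sub, hsym _ (hmaps hp)]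
  rw [setIntegral_Icc_prod_Icc_eq_of_pdx_pdy zero_lt_one zero_le_one hg hF hdy hdx hpde,
    integral_mul_const] at hsquare
  rw [← image_parallelogramMap_unitTriangle, ContinuousAffineMap.setIntegral_image volume _
    (parallelogramMap_injective hind) measurableSet_unitTriangle, det_contLinear_parallelogramMap,
    smul_eq_mul]
  linarith
end
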